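/- Variance reduction for stratified ΔEx (ΔExS ≤ ΔExA): let q be an SMM in difference representation where additionally q₊ = Σ_{k=1}^{K₊} α₊_k q₊_k and q₋ = Σ_{j=1}^{K₋} α₋_j q₋_j are themselves additive mixtures of probability densities (α₊_k, α₋_j ≥ 0 summing to 1 in each mixture), let p, f, w be as in the importance-sampling setup with ∫ (f w)² q₊ dμ < ∞ and ∫ (f w)² q₋ dμ < ∞, and fix sample sizes S₊, S₋ such that α₊_k·S₊ and α₋_j·S₋ are positive integers. Let Î_ΔExA be the ΔEx estimator formed with S₊ i.i.d. samples from q₊·μ and S₋ i.i.d. samples from q₋·μ, and let Î_ΔExS be the ΔEx estimator in which samples from q₊ and q₋ are replaced by stratified samples drawing exactly α₊_k·S₊ samples from each q₊_k·μ and α₋_j·S₋ samples from each q₋_j·μ, all samples jointly independent and the within-mixture averages replaced by the correspondingly weighted stratified averages. Then Var[Î_ΔExS] ≤ Var[Î_ΔExA]. -/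

import Mathlib

open MeasureTheory ProbabilityTheory

open scoped ENNReal

/-!
Both estimators are differences of two independent blocks, one fed by `q₊`, one by `q₋`, so
each variance splits as `(Z₊/Z_q)² Var(block₊) + (Z₋/Z_q)² Var(block₋)`, and the blocks can be
compared one at a time. With proportional allocation `S_k = α_k S`, the stratified block has
variance `S⁻¹ ∑ α_k Var_{q_k}(f w)` and the i.i.d. block `S⁻¹ Var_q(f w)`. For a mixture
`q = ∑ α_k q_k` the law of total variance gives `∑ α_k Var_{q_k}(g) ≤ Var_q(g)`: each
`Var_{q_k}(g)` is at most `E_{q_k}(g - E_q g)²`, and these average to `Var_q(g)`.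
-/

section Sampling

variable {Ω : Type*} [MeasurableSpace Ω]

lemma memLp_sum_pi {ι : Type*} [Fintype ι] {Ω : ι → Type*} [∀ i, MeasurableSpace (Ω i)]
    {μ : ∀ i, Measure (Ω i)} [∀ i, IsProbabilityMeasure (μ i)] {X : ∀ i, Ω i → ℝ}
    (hX : ∀ i, MemLp (X i) 2 (μ i)) :
    MemLp (fun ω => ∑ i, X i (ω i)) 2 (Measure.pi μ) :=
  memLp_finsetSum _ fun i _ => (hX i).comp_measurePreserving (measurePreserving_eval μ i)

lemma variance_sum_iid {ι : Type*} [Fintype ι] {ν : Measure Ω} [IsProbabilityMeasure ν]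
    {g : Ω → ℝ} (hg : MemLp g 2 ν) :
    Var[fun ω : ι → Ω => ∑ i, g (ω i); Measure.pi fun _ => ν] = Fintype.card ι * Var[g; ν] := by
  rw [← Finset.sum_fn, variance_sum_pi fun _ => hg]
  simp

lemma variance_sub_mul_prod {Ω' : Type*} [MeasurableSpace Ω'] {μ : Measure Ω} {ν : Measure Ω'}
    [IsProbabilityMeasure μ] [IsProbabilityMeasure ν] {X : Ω → ℝ} {Y : Ω' → ℝ}
    (hX : MemLp X 2 μ) (hY : MemLp Y 2 ν) (a b : ℝ) :
    Var[fun p => a * X p.1 - b * Y p.2; μ.prod ν] = a ^ 2 * Var[X; μ] + b ^ 2 * Var[Y; ν] := by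
  have h := variance_add_prod (hX.const_mul a) (hY.const_mul (-b))
  simp only [neg_mul, ← sub_eq_add_neg] at h
  rw [h, variance_fun_neg, variance_const_mul, variance_const_mul]

lemma memLp_stratified_sum {K : Type*} [Fintype K] {S : K → ℕ}
    {ν : K → Measure Ω} [∀ k, IsProbabilityMeasure (ν k)] {g : Ω → ℝ}
    (hg : ∀ k, MemLp g 2 (ν k)) (c : K → ℝ) :
    MemLp (fun ω : ∀ k, Fin (S k) → Ω => ∑ k, c k * ∑ s, g (ω k s)) 2
      (Measure.pi fun k => Measure.pi fun _ => ν k) :=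
  memLp_sum_pi fun k => (memLp_sum_pi fun _ => hg k).const_mul (c k)

lemma variance_stratified_sum {K : Type*} [Fintype K] {S : K → ℕ}
    {ν : K → Measure Ω} [∀ k, IsProbabilityMeasure (ν k)] {g : Ω → ℝ}
    (hg : ∀ k, MemLp g 2 (ν k)) (c : K → ℝ) :
    Var[fun ω : ∀ k, Fin (S k) → Ω => ∑ k, c k * ∑ s, g (ω k s);
        Measure.pi fun k => Measure.pi fun _ => ν k]
      = ∑ k, c k ^ 2 * S k * Var[g; ν k] := by
  rw [← Finset.sum_fn, variance_sum_pi fun k => (memLp_sum_pi fun _ => hg k).const_mul (c k)]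
  simp only [variance_const_mul, variance_sum_iid (hg _), Fintype.card_fin, mul_assoc]

lemma variance_stratified_mean_of_proportional {K : Type*} [Fintype K] {S : K → ℕ} {n : ℕ}
    {α : K → ℝ} (hS : ∀ k, (S k : ℝ) = α k * n) (hS0 : ∀ k, 0 < S k)
    {ν : K → Measure Ω} [∀ k, IsProbabilityMeasure (ν k)] {g : Ω → ℝ}
    (hg : ∀ k, MemLp g 2 (ν k)) :
    Var[fun ω : ∀ k, Fin (S k) → Ω => ∑ k, α k / S k * ∑ s, g (ω k s);
        Measure.pi fun k => Measure.pi fun _ => ν k]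
      = (n : ℝ)⁻¹ * ∑ k, α k * Var[g; ν k] := by
  rw [variance_stratified_sum hg, Finset.mul_sum]
  refine Finset.sum_congr rfl fun k _ => ?_
  have hSk : (S k : ℝ) ≠ 0 := Nat.cast_ne_zero.2 (hS0 k).ne'
  rw [hS k] at hSk ⊢
  have hα : α k ≠ 0 := left_ne_zero_of_mul hSk
  have hn : (n : ℝ) ≠ 0 := right_ne_zero_of_mul hSk
  field_simp

end Sampling

section Mixture

variable {Ω : Type*} [MeasurableSpace Ω]

lemma sum_toReal_mul_variance_le_variance_sum_smul {ι : Type*} [Fintype ι]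
    {ν : ι → Measure Ω} [∀ i, IsProbabilityMeasure (ν i)] {a : ι → ℝ≥0∞} (ha : ∀ i, a i ≠ ∞)
    {g : Ω → ℝ} (hg : ∀ i, MemLp g 2 (ν i)) :
    ∑ i, (a i).toReal * Var[g; ν i] ≤ Var[g; ∑ i, a i • ν i] := by
  set m := ∫ x, g x ∂(∑ i, a i • ν i)
  have hg_meas : AEMeasurable g (∑ i, a i • ν i) := by
    rw [← Measure.sum_fintype]
    exact .sum_measure fun i => (hg i).aemeasurable.smul_measure _
  have hsq : ∀ i, Integrable (fun x => (g x - m) ^ 2) (ν i) := fun i =>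
    ((hg i).sub (memLp_const m)).integrable_sq
  rw [variance_eq_integral hg_meas,
    integral_finsetSum_measure fun i _ => (hsq i).smul_measure (ha i)]
  refine Finset.sum_le_sum fun i _ => ?_
  rw [integral_smul_measure, smul_eq_mul]
  gcongr
  calc Var[g; ν i] = Var[fun x => g x - m; ν i] :=
        (variance_sub_const (hg i).aestronglyMeasurable m).symm
    _ ≤ _ := variance_le_expectation_sq ((hg i).sub (memLp_const m)).aestronglyMeasurable

lemma MeasureTheory.MemLp.of_sum_smul {ι : Type*} [Fintype ι] {ν : ι → Measure Ω} {a : ι → ℝ≥0∞}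
    {g : Ω → ℝ} {p : ℝ≥0∞} (hg : MemLp g p (∑ j, a j • ν j)) {i : ι} (hai : a i ≠ 0)
    (hai' : a i ≠ ∞) : MemLp g p (ν i) := by
  refine hg.of_measure_le_smul (ENNReal.inv_ne_top.2 hai) ?_
  calc ν i = (a i)⁻¹ • a i • ν i := by rw [smul_smul, ENNReal.inv_mul_cancel hai hai', one_smul]
    _ ≤ (a i)⁻¹ • ∑ j, a j • ν j := by
      gcongr
      exact Finset.single_le_sum (f := fun j => a j • ν j) (fun j _ => Measure.zero_le _)
        (Finset.mem_univ i)

end Mixture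

section Density

variable {X : Type*} [MeasurableSpace X] {μ : Measure X}

lemma isProbabilityMeasure_withDensity_ofReal {ρ : X → ℝ} (hρ0 : 0 ≤ᵐ[μ] ρ)
    (hρ1 : ∫ x, ρ x ∂μ = 1) :
    IsProbabilityMeasure (μ.withDensity fun x => ENNReal.ofReal (ρ x)) := by
  have hρ : Integrable ρ μ := .of_integral_ne_zero (by rw [hρ1]; exact one_ne_zero)
  constructor
  rw [withDensity_apply _ MeasurableSet.univ, Measure.restrict_univ,
    ← ofReal_integral_eq_lintegral_ofReal hρ hρ0, hρ1, ENNReal.ofReal_one]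

lemma memLp_two_withDensity_ofReal_iff {ρ : X → ℝ} (hρ : Measurable ρ) (hρ0 : ∀ x, 0 ≤ ρ x)
    {g : X → ℝ} (hg : Measurable g) :
    MemLp g 2 (μ.withDensity fun x => ENNReal.ofReal (ρ x))
      ↔ Integrable (fun x => g x ^ 2 * ρ x) μ := by
  rw [memLp_two_iff_integrable_sq hg.aestronglyMeasurable,
    integrable_withDensity_iff hρ.ennreal_ofReal (.of_forall fun _ => ENNReal.ofReal_lt_top)]
  simp only [ENNReal.toReal_ofReal (hρ0 _)]

lemma withDensity_ofReal_sum_mul {ι : Type*} [Fintype ι] {α : ι → ℝ} {ρ : ι → X → ℝ}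
    (hα : ∀ i, 0 ≤ α i) (hρ : ∀ i, Measurable (ρ i)) (hρ0 : ∀ i x, 0 ≤ ρ i x) :
    μ.withDensity (fun x => ENNReal.ofReal (∑ i, α i * ρ i x))
      = ∑ i, ENNReal.ofReal (α i) • μ.withDensity fun x => ENNReal.ofReal (ρ i x) := by
  have h : (fun x => ENNReal.ofReal (∑ i, α i * ρ i x))
      = ∑' i, ENNReal.ofReal (α i) • fun x => ENNReal.ofReal (ρ i x) := by
    ext x
    rw [tsum_fintype, Finset.sum_apply,
      ENNReal.ofReal_sum_of_nonneg fun i _ => mul_nonneg (hα i) (hρ0 i x)]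
    simp only [ENNReal.ofReal_mul (hα _), Pi.smul_apply, smul_eq_mul]
  rw [h, withDensity_tsum fun i => (hρ i).ennreal_ofReal.const_smul _, Measure.sum_fintype]
  simp only [withDensity_smul _ (hρ _).ennreal_ofReal]

lemma sum_mul_variance_withDensity_le {ι : Type*} [Fintype ι] {α : ι → ℝ} {ρ : ι → X → ℝ}
    (hα : ∀ i, 0 ≤ α i) (hρ : ∀ i, Measurable (ρ i)) (hρ0 : ∀ i x, 0 ≤ ρ i x)
    (hρ1 : ∀ i, ∫ x, ρ i x ∂μ = 1) {g : X → ℝ}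
    (hg : ∀ i, MemLp g 2 (μ.withDensity fun x => ENNReal.ofReal (ρ i x))) :
    ∑ i, α i * Var[g; μ.withDensity fun x => ENNReal.ofReal (ρ i x)]
      ≤ Var[g; μ.withDensity fun x => ENNReal.ofReal (∑ i, α i * ρ i x)] := by
  have := fun i => isProbabilityMeasure_withDensity_ofReal (.of_forall (hρ0 i)) (hρ1 i)
  rw [withDensity_ofReal_sum_mul hα hρ hρ0]
  simpa only [ENNReal.toReal_ofReal (hα _)] using
    sum_toReal_mul_variance_le_variance_sum_smul (a := fun i => ENNReal.ofReal (α i))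
      (fun _ => ENNReal.ofReal_ne_top) hg

lemma MeasureTheory.MemLp.of_withDensity_ofReal_sum_mul {ι : Type*} [Fintype ι] {α : ι → ℝ}
    {ρ : ι → X → ℝ} (hα : ∀ i, 0 ≤ α i) (hρ : ∀ i, Measurable (ρ i)) (hρ0 : ∀ i x, 0 ≤ ρ i x)
    {g : X → ℝ} {p : ℝ≥0∞}
    (hg : MemLp g p (μ.withDensity fun x => ENNReal.ofReal (∑ i, α i * ρ i x)))
    {i : ι} (hαi : 0 < α i) : MemLp g p (μ.withDensity fun x => ENNReal.ofReal (ρ i x)) := by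
  rw [withDensity_ofReal_sum_mul hα hρ hρ0] at hg
  exact MemLp.of_sum_smul hg (ENNReal.ofReal_pos.2 hαi).ne' ENNReal.ofReal_ne_top

end Density

lemma pos_of_natCast_eq_mul {S n : ℕ} {α : ℝ} (hS : (S : ℝ) = α * n) (hS0 : 0 < S) : 0 < α :=
  pos_of_mul_pos_left (hS ▸ Nat.cast_pos.2 hS0) n.cast_nonneg

section Stratification

variable {X : Type*} [MeasurableSpace X] {μ : Measure X}
  {K : Type*} [Fintype K] {α : K → ℝ} {ρ : K → X → ℝ} {S : K → ℕ} {n : ℕ}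

lemma memLp_stratified_sum_withDensity (hρ : ∀ k, Measurable (ρ k)) (hρ0 : ∀ k x, 0 ≤ ρ k x)
    (hρ1 : ∀ k, ∫ x, ρ k x ∂μ = 1) (hS : ∀ k, (S k : ℝ) = α k * n) (hS0 : ∀ k, 0 < S k)
    {g : X → ℝ} (hg : MemLp g 2 (μ.withDensity fun x => ENNReal.ofReal (∑ k, α k * ρ k x)))
    (c : K → ℝ) :
    MemLp (fun ω : ∀ k, Fin (S k) → X => ∑ k, c k * ∑ s, g (ω k s)) 2
      (Measure.pi fun k => Measure.pi fun _ => μ.withDensity fun x => ENNReal.ofReal (ρ k x)) :=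
  have hα k := pos_of_natCast_eq_mul (hS k) (hS0 k)
  have := fun k => isProbabilityMeasure_withDensity_ofReal (.of_forall (hρ0 k)) (hρ1 k)
  memLp_stratified_sum
    (fun k => hg.of_withDensity_ofReal_sum_mul (fun k => (hα k).le) hρ hρ0 (hα k)) c

lemma variance_stratified_le_variance_iid (hρ : ∀ k, Measurable (ρ k))
    (hρ0 : ∀ k x, 0 ≤ ρ k x) (hρ1 : ∀ k, ∫ x, ρ k x ∂μ = 1)
    (hmix1 : ∫ x, ∑ k, α k * ρ k x ∂μ = 1)
    (hS : ∀ k, (S k : ℝ) = α k * n) (hS0 : ∀ k, 0 < S k) {g : X → ℝ}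
    (hg : MemLp g 2 (μ.withDensity fun x => ENNReal.ofReal (∑ k, α k * ρ k x))) :
    Var[fun ω : ∀ k, Fin (S k) → X => ∑ k, α k / S k * ∑ s, g (ω k s);
        Measure.pi fun k => Measure.pi fun _ => μ.withDensity fun x => ENNReal.ofReal (ρ k x)]
      ≤ (n : ℝ)⁻¹ ^ 2 * Var[fun ω : Fin n → X => ∑ s, g (ω s);
        Measure.pi fun _ => μ.withDensity fun x => ENNReal.ofReal (∑ k, α k * ρ k x)] := by
  have hα k := pos_of_natCast_eq_mul (hS k) (hS0 k)
  have := fun k => isProbabilityMeasure_withDensity_ofReal (.of_forall (hρ0 k)) (hρ1 k)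
  have := isProbabilityMeasure_withDensity_ofReal
    (.of_forall fun x => Finset.sum_nonneg fun k _ => mul_nonneg (hα k).le (hρ0 k x)) hmix1
  have hgk k := hg.of_withDensity_ofReal_sum_mul (fun k => (hα k).le) hρ hρ0 (hα k)
  have hn : (n : ℝ)⁻¹ ^ 2 * n = (n : ℝ)⁻¹ := by
    rcases eq_or_ne (n : ℝ) 0 with h | h
    · simp [h]
    · field_simp
  rw [variance_stratified_mean_of_proportional hS hS0 hgk, variance_sum_iid hg,
    Fintype.card_fin, ← mul_assoc, hn]
  gcongr
  exact sum_mul_variance_withDensity_le (fun k => (hα k).le) hρ hρ0 hρ1 hgk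

end Stratification

theorem deltaExS_variance_le_deltaExA_general
    {X : Type*} [MeasurableSpace X] (μ : Measure X)
    (qp qm q : X → ℝ) (Zp Zm : ℝ)
    (hqp_meas : Measurable qp) (hqm_meas : Measurable qm)
    (hqp_nonneg : ∀ x, 0 ≤ qp x) (hqm_nonneg : ∀ x, 0 ≤ qm x)
    (hqp_int : ∫ x, qp x ∂μ = 1) (hqm_int : ∫ x, qm x ∂μ = 1)
    (hq_def : ∀ x, q x = (Zp - Zm)⁻¹ * (Zp * qp x - Zm * qm x))
    -- mixture structure of `q₊` and `q₋`
    (Kp Km : ℕ)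
    (qpk : Fin Kp → X → ℝ) (αp : Fin Kp → ℝ)
    (qmk : Fin Km → X → ℝ) (αm : Fin Km → ℝ)
    (hqpk_meas : ∀ k, Measurable (qpk k)) (hqpk_nonneg : ∀ k x, 0 ≤ qpk k x)
    (hqpk_int : ∀ k, ∫ x, qpk k x ∂μ = 1)
    (hqmk_meas : ∀ j, Measurable (qmk j)) (hqmk_nonneg : ∀ j x, 0 ≤ qmk j x)
    (hqmk_int : ∀ j, ∫ x, qmk j x ∂μ = 1)
    (hqp_mix : ∀ x, qp x = ∑ k, αp k * qpk k x)
    (hqm_mix : ∀ x, qm x = ∑ j, αm j * qmk j x)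
    -- importance-sampling setup
    (p f w : X → ℝ)
    (hp_meas : Measurable p)
    (hf_meas : Measurable f)
    (hw_def : ∀ x, w x = if 0 < q x then p x / q x else 0)
    (hfw2_qp : Integrable (fun x => (f x * w x) ^ 2 * qp x) μ)
    (hfw2_qm : Integrable (fun x => (f x * w x) ^ 2 * qm x) μ)
    -- sample sizes and proportional stratified allocation
    (Sp Sm : ℕ)
    (Spk : Fin Kp → ℕ) (Smk : Fin Km → ℕ)
    (hSpk_pos : ∀ k, 1 ≤ Spk k) (hSmk_pos : ∀ j, 1 ≤ Smk j)
    (hSpk_def : ∀ k, (Spk k : ℝ) = αp k * Sp)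
    (hSmk_def : ∀ j, (Smk j : ℝ) = αm j * Sm) :
    variance
      (fun ω : (∀ k : Fin Kp, Fin (Spk k) → X) × (∀ j : Fin Km, Fin (Smk j) → X) =>
        (Zp / (Zp - Zm))
            * ∑ k, αp k / (Spk k : ℝ) * ∑ s : Fin (Spk k), f (ω.1 k s) * w (ω.1 k s)
          - (Zm / (Zp - Zm))
            * ∑ j, αm j / (Smk j : ℝ) * ∑ s : Fin (Smk j), f (ω.2 j s) * w (ω.2 j s))
      ((Measure.pi fun k =>
          Measure.pi fun _ : Fin (Spk k) =>
            μ.withDensity fun x => ENNReal.ofReal (qpk k x)).prod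
        (Measure.pi fun j =>
          Measure.pi fun _ : Fin (Smk j) =>
            μ.withDensity fun x => ENNReal.ofReal (qmk j x)))
    ≤ variance
        (fun ω : (Fin Sp → X) × (Fin Sm → X) =>
          (Zp / (Zp - Zm)) * (Sp : ℝ)⁻¹ * ∑ s : Fin Sp, f (ω.1 s) * w (ω.1 s)
            - (Zm / (Zp - Zm)) * (Sm : ℝ)⁻¹ * ∑ s : Fin Sm, f (ω.2 s) * w (ω.2 s))
        ((Measure.pi fun _ : Fin Sp =>
            μ.withDensity fun x => ENNReal.ofReal (qp x)).prod
          (Measure.pi fun _ : Fin Sm =>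
            μ.withDensity fun x => ENNReal.ofReal (qm x))) := by
  obtain rfl : qp = fun x => ∑ k, αp k * qpk k x := funext hqp_mix
  obtain rfl : qm = fun x => ∑ j, αm j * qmk j x := funext hqm_mix
  beta_reduce at *
  have hw : Measurable w := by
    have hq : Measurable q := by rw [funext hq_def]; fun_prop
    rw [funext hw_def]
    exact Measurable.ite (measurableSet_lt measurable_const hq) (hp_meas.div hq) measurable_const
  have hg : Measurable fun x => f x * w x := hf_meas.mul hw
  have hLp_p := (memLp_two_withDensity_ofReal_iff hqp_meas hqp_nonneg hg).2 hfw2_qp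
  have hLp_m := (memLp_two_withDensity_ofReal_iff hqm_meas hqm_nonneg hg).2 hfw2_qm
  have := isProbabilityMeasure_withDensity_ofReal (.of_forall hqp_nonneg) hqp_int
  have := isProbabilityMeasure_withDensity_ofReal (.of_forall hqm_nonneg) hqm_int
  have := fun k => isProbabilityMeasure_withDensity_ofReal (.of_forall (hqpk_nonneg k)) (hqpk_int k)
  have := fun j => isProbabilityMeasure_withDensity_ofReal (.of_forall (hqmk_nonneg j)) (hqmk_int j)
  rw [variance_sub_mul_prod
      (memLp_stratified_sum_withDensity hqpk_meas hqpk_nonneg hqpk_int hSpk_def hSpk_pos hLp_p _)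
      (memLp_stratified_sum_withDensity hqmk_meas hqmk_nonneg hqmk_int hSmk_def hSmk_pos hLp_m _),
    variance_sub_mul_prod (memLp_sum_pi fun _ => hLp_p) (memLp_sum_pi fun _ => hLp_m),
    mul_pow, mul_pow, mul_assoc, mul_assoc]
  gcongr
  · exact variance_stratified_le_variance_iid hqpk_meas hqpk_nonneg hqpk_int hqp_int
      hSpk_def hSpk_pos (g := fun x => f x * w x) hLp_p
  · exact variance_stratified_le_variance_iid hqmk_meas hqmk_nonneg hqmk_int hqm_int
      hSmk_def hSmk_pos (g := fun x => f x * w x) hLp_m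

/-- **Variance reduction for stratified ΔEx (ΔExS ≤ ΔExA).**
Let `q = Z_q⁻¹(Z₊ q₊ − Z₋ q₋)` be an SMM in difference representation where
`q₊ = Σ_k α₊_k q₊_k` and `q₋ = Σ_j α₋_j q₋_j` are additive mixtures, let `w = p/q` be
the importance weight with `∫(fw)² q₊ dμ < ∞` and `∫(fw)² q₋ dμ < ∞`, and let
`α₊_k·S₊` and `α₋_j·S₋` be positive integers. Then the stratified ΔEx estimator
(`ΔExS`, drawing exactly `α₊_k·S₊` samples from each `q₊_k·μ` and `α₋_j·S₋` from each
`q₋_j·μ`, all jointly independent) has variance at most that of the ancestral ΔEx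
estimator (`ΔExA`, with `S₊` i.i.d. samples from `q₊·μ` and `S₋` from `q₋·μ`). -/
theorem deltaExS_variance_le_deltaExA
    {X : Type*} [MeasurableSpace X] (μ : Measure X)
    (qp qm q : X → ℝ) (Zp Zm : ℝ)
    (hqp_meas : Measurable qp) (hqm_meas : Measurable qm)
    (hqp_nonneg : ∀ x, 0 ≤ qp x) (hqm_nonneg : ∀ x, 0 ≤ qm x)
    (hqp_int : ∫ x, qp x ∂μ = 1) (hqm_int : ∫ x, qm x ∂μ = 1)
    (hZp : 0 < Zp) (hZm : 0 ≤ Zm) (hZq : 0 < Zp - Zm)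
    (hq_def : ∀ x, q x = (Zp - Zm)⁻¹ * (Zp * qp x - Zm * qm x))
    (hq_nonneg : ∀ᵐ x ∂μ, 0 ≤ q x)
    -- mixture structure of `q₊` and `q₋`
    (Kp Km : ℕ) (hKp : 1 ≤ Kp) (hKm : 1 ≤ Km)
    (qpk : Fin Kp → X → ℝ) (αp : Fin Kp → ℝ)
    (qmk : Fin Km → X → ℝ) (αm : Fin Km → ℝ)
    (hqpk_meas : ∀ k, Measurable (qpk k)) (hqpk_nonneg : ∀ k x, 0 ≤ qpk k x)
    (hqpk_int : ∀ k, ∫ x, qpk k x ∂μ = 1)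
    (hqmk_meas : ∀ j, Measurable (qmk j)) (hqmk_nonneg : ∀ j x, 0 ≤ qmk j x)
    (hqmk_int : ∀ j, ∫ x, qmk j x ∂μ = 1)
    (hαp_nonneg : ∀ k, 0 ≤ αp k) (hαp_sum : ∑ k, αp k = 1)
    (hαm_nonneg : ∀ j, 0 ≤ αm j) (hαm_sum : ∑ j, αm j = 1)
    (hqp_mix : ∀ x, qp x = ∑ k, αp k * qpk k x)
    (hqm_mix : ∀ x, qm x = ∑ j, αm j * qmk j x)
    -- importance-sampling setup
    (p f w : X → ℝ)
    (hp_meas : Measurable p) (hp_nonneg : ∀ x, 0 ≤ p x) (hp_int : ∫ x, p x ∂μ = 1)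
    (hf_meas : Measurable f)
    (hf_int : Integrable (fun x => |f x| * p x) μ)
    (habs : ∀ᵐ x ∂μ, q x = 0 → p x = 0)
    (hw_def : ∀ x, w x = if 0 < q x then p x / q x else 0)
    (hfw2_qp : Integrable (fun x => (f x * w x) ^ 2 * qp x) μ)
    (hfw2_qm : Integrable (fun x => (f x * w x) ^ 2 * qm x) μ)
    -- sample sizes and proportional stratified allocation
    (Sp Sm : ℕ) (hSp : 1 ≤ Sp) (hSm : 1 ≤ Sm)
    (Spk : Fin Kp → ℕ) (Smk : Fin Km → ℕ)
    (hSpk_pos : ∀ k, 1 ≤ Spk k) (hSmk_pos : ∀ j, 1 ≤ Smk j)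
    (hSpk_def : ∀ k, (Spk k : ℝ) = αp k * Sp)
    (hSmk_def : ∀ j, (Smk j : ℝ) = αm j * Sm) :
    variance
      (fun ω : (∀ k : Fin Kp, Fin (Spk k) → X) × (∀ j : Fin Km, Fin (Smk j) → X) =>
        (Zp / (Zp - Zm))
            * ∑ k, αp k / (Spk k : ℝ) * ∑ s : Fin (Spk k), f (ω.1 k s) * w (ω.1 k s)
          - (Zm / (Zp - Zm))
            * ∑ j, αm j / (Smk j : ℝ) * ∑ s : Fin (Smk j), f (ω.2 j s) * w (ω.2 j s))
      ((Measure.pi fun k =>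
          Measure.pi fun _ : Fin (Spk k) =>
            μ.withDensity fun x => ENNReal.ofReal (qpk k x)).prod
        (Measure.pi fun j =>
          Measure.pi fun _ : Fin (Smk j) =>
            μ.withDensity fun x => ENNReal.ofReal (qmk j x)))
    ≤ variance
        (fun ω : (Fin Sp → X) × (Fin Sm → X) =>
          (Zp / (Zp - Zm)) * (Sp : ℝ)⁻¹ * ∑ s : Fin Sp, f (ω.1 s) * w (ω.1 s)
            - (Zm / (Zp - Zm)) * (Sm : ℝ)⁻¹ * ∑ s : Fin Sm, f (ω.2 s) * w (ω.2 s))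
        ((Measure.pi fun _ : Fin Sp =>
            μ.withDensity fun x => ENNReal.ofReal (qp x)).prod
          (Measure.pi fun _ : Fin Sm =>
            μ.withDensity fun x => ENNReal.ofReal (qm x))) :=
  deltaExS_variance_le_deltaExA_general μ qp qm q Zp Zm hqp_meas hqm_meas hqp_nonneg hqm_nonneg
    hqp_int hqm_int hq_def Kp Km qpk αp qmk αm hqpk_meas hqpk_nonneg hqpk_int hqmk_meas hqmk_nonneg
    hqmk_int hqp_mix hqm_mix p f w hp_meas hf_meas hw_def hfw2_qp hfw2_qm Sp Sm Spk Smk hSpk_pos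
    hSmk_pos hSpk_def hSmk_def
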